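/- arXiv:1603.07935 — 2 statements merged into one kernel-verified Lean document; each statement's English description precedes it below -/
import Mathlib

section
/- Let G be a finite tree with vertex set V, |V| ≥ 3; for v ∈ V let tᵥ be its degree and t′ᵥ the number of its neighbors of degree ≥ 2. Let d : V → ℤ with dᵥ ≥ 1 for all v, and let M be the V×V symmetric matrix with M_{vv} = −dᵥ, M_{vw} = 1 if v and w are adjacent, and 0 otherwise. Let Y ∈ ℤ^V be the vector with Yᵥ = 2 if deg v ≥ 2 and Yᵥ = 1 if v is a leaf. Then (MY)ᵥ ≤ 2 − dᵥ for all v ∈ V if and only if dᵥ ≥ tᵥ + t′ᵥ − 2 for all v ∈ V. -/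
open Finset

/-- for the intersection matrix `M` of a weighted finite tree
(`M_{vv} = -dᵥ`, `M_{vw} = 1` for adjacent `v, w`, `0` otherwise, with `dᵥ ≥ 1`)
and the cycle `Y` with `Yᵥ = 2` at internal vertices and `Yᵥ = 1` at leaves,
`(MY)ᵥ ≤ 2 - dᵥ` for all `v` iff `dᵥ ≥ tᵥ + t'ᵥ - 2` for all `v`, where `tᵥ` is
the degree and `t'ᵥ` the number of neighbors of degree ≥ 2. -/
theorem stmt_9 {V : Type*} [Fintype V] [DecidableEq V]
    (G : SimpleGraph V) [DecidableRel G.Adj]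
    (hG : G.IsTree) (h3 : 3 ≤ Fintype.card V)
    (d : V → ℤ) (hd : ∀ v, 1 ≤ d v)
    (M : Matrix V V ℤ)
    (hM : ∀ v w, M v w = if v = w then -d v else if G.Adj v w then 1 else 0)
    (Y : V → ℤ) (hY : ∀ v, Y v = if 2 ≤ G.degree v then 2 else 1) :
    (∀ v, M.mulVec Y v ≤ 2 - d v) ↔
      (∀ v, (G.degree v : ℤ) +
          (((G.neighborFinset v).filter fun w => 2 ≤ G.degree w).card : ℤ) - 2 ≤ d v) := by
  have hfilt : ∀ v, ((G.neighborFinset v).filter fun w => 2 ≤ G.degree w).card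
      ≤ G.degree v := by
    intro v
    rw [← G.card_neighborFinset_eq_degree]
    exact Finset.card_filter_le _ _
  have key : ∀ v, M.mulVec Y v =
      -d v * Y v + (G.degree v : ℤ) +
        (((G.neighborFinset v).filter fun w => 2 ≤ G.degree w).card : ℤ) := by
    intro v
    have h1 : M.mulVec Y v = ∑ w, M v w * Y w := rfl
    rw [h1]
    have hsplit : ∀ w, M v w * Y w =
        (if w = v then -d v * Y v else 0) +
        (if w ∈ G.neighborFinset v then Y w else 0) := by
      intro w
      rw [hM]
      by_cases hw : v = w
      · subst hw
        simp [G.irrefl]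
      · simp only [hw, if_false, Ne.symm hw, SimpleGraph.mem_neighborFinset]
        by_cases ha : G.Adj v w <;> simp [ha]
    rw [Finset.sum_congr rfl fun w _ => hsplit w, Finset.sum_add_distrib,
      Finset.sum_ite_eq' Finset.univ v]
    simp only [Finset.mem_univ, if_true]
    have h2 : (∑ w, if w ∈ G.neighborFinset v then Y w else 0)
        = ∑ w ∈ G.neighborFinset v, Y w := by
      rw [Finset.sum_ite_mem, Finset.univ_inter]
    rw [h2]
    have h3' : ∑ w ∈ G.neighborFinset v, Y w
        = (G.degree v : ℤ) +
          (((G.neighborFinset v).filter fun w => 2 ≤ G.degree w).card : ℤ) := by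
      have hterm : ∀ w ∈ G.neighborFinset v,
          Y w = 1 + (if 2 ≤ G.degree w then 1 else 0) := by
        intro w _
        rw [hY]
        split <;> norm_num
      rw [Finset.sum_congr rfl hterm, Finset.sum_add_distrib, Finset.sum_const,
        Finset.sum_boole, G.card_neighborFinset_eq_degree]
      push_cast
      ring
    rw [h3']
    ring
  constructor
  · intro h v
    by_cases hv : 2 ≤ G.degree v
    · have hh := h v
      rw [key v, hY v, if_pos hv] at hh
      linarith
    · have hh := hfilt v
      have := hd v
      have hdeg : G.degree v ≤ 1 := by omega
      push_cast
      omega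
  · intro h v
    rw [key v, hY v]
    by_cases hv : 2 ≤ G.degree v
    · rw [if_pos hv]
      have := h v
      linarith
    · rw [if_neg hv]
      have hh := hfilt v
      have := hd v
      have hdeg : G.degree v ≤ 1 := by omega
      push_cast
      omega
end

section
/- Let G be a finite tree with vertex set V, |V| ≥ 3; for v ∈ V let tᵥ be its degree and t′ᵥ the number of its neighbors of degree ≥ 2. Let d : V → ℤ and let M be the V×V symmetric matrix with M_{vv} = −dᵥ, M_{vw} = 1 if v and w are adjacent, 0 otherwise. Let Z ∈ ℤ^V be the vector with Zᵥ = 2 if deg v ≥ 2 and Zᵥ = 1 if v is a leaf. Suppose v₀ is a vertex of degree ≥ 2, that every other vertex v ≠ v₀ of degree ≥ 2 satisfies dᵥ = tᵥ + t′ᵥ − 2, and that Zᵀ M Z + Σ_{v∈V} Zᵥ·(dᵥ − 2) ≤ −2. Then d_{v₀} ≥ t_{v₀} + t′_{v₀} − 1. -/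
/-!
Since `Zᵥ = 1 + [v is not a leaf]`, the `Z`-weights of the neighbours of `v` add up to
`tᵥ + t′ᵥ`, so `ZᵀMZ + Σᵥ Zᵥ(dᵥ - 2) = Σᵥ Zᵥ (dᵥ(1 - Zᵥ) + tᵥ + t′ᵥ - 2)`. The hypothesis kills
the term of every internal `v ≠ v₀`, and the term of a leaf is `1 + 1 - 2 = 0` because in a tree
with at least three vertices the neighbour of a leaf is not a leaf. What remains is the term
`2(t_{v₀} + t′_{v₀} - 2 - d_{v₀}) ≤ -2` of `v₀`.
-/

open Finset Matrix

namespace SimpleGraph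

variable {V : Type*} [Fintype V] {G : SimpleGraph V} [DecidableRel G.Adj]

theorem Connected.degree_eq_one_of_not_two_le_degree (hG : G.Connected)
    (h2 : 2 ≤ Fintype.card V) {v : V} (hv : ¬ 2 ≤ G.degree v) : G.degree v = 1 := by
  have : Nontrivial V := Fintype.one_lt_card_iff_nontrivial.mp h2
  have := hG.preconnected.degree_pos_of_nontrivial v
  omega

theorem Connected.two_le_degree_of_adj_of_degree_eq_one (hG : G.Connected)
    (h3 : 3 ≤ Fintype.card V) {v w : V} (hv : G.degree v = 1) (hvw : G.Adj v w) :
    2 ≤ G.degree w := by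
  classical
  by_contra hw
  have hw : G.degree w = 1 := hG.degree_eq_one_of_not_two_le_degree (by omega) hw
  obtain ⟨z, -, hz⟩ := exists_mem_notMem_of_card_lt_card (s := {v, w}) (t := univ)
    (card_le_two.trans_lt (by rw [card_univ]; omega))
  obtain ⟨p⟩ := hG.preconnected v z
  obtain ⟨⟨⟨a, b⟩, hab⟩, -, ha, hb⟩ :=
    p.exists_boundary_dart {v, w} (by simp) (by simpa using hz)
  obtain ⟨_, -, hv'⟩ := degree_eq_one_iff_existsUnique_adj.mp hv
  obtain ⟨_, -, hw'⟩ := degree_eq_one_iff_existsUnique_adj.mp hw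
  simp only [Set.mem_insert_iff, Set.mem_singleton_iff, not_or] at ha hb
  rcases ha with rfl | rfl
  · exact hb.2 ((hv' b hab).trans (hv' w hvw).symm)
  · exact hb.1 ((hw' b hab).trans (hw' v hvw.symm).symm)

variable (G) in
def internalNeighborFinset (v : V) : Finset V := {w ∈ G.neighborFinset v | 2 ≤ G.degree w}

variable (G) in
/-- The cycle `E + E′` of the paper, `E′` being the vertices of degree at least two. -/
def innerDoubledCycle (v : V) : ℤ := if 2 ≤ G.degree v then 2 else 1

theorem Connected.card_internalNeighborFinset_eq_one (hG : G.Connected)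
    (h3 : 3 ≤ Fintype.card V) {v : V} (hv : G.degree v = 1) :
    #(G.internalNeighborFinset v) = 1 := by
  obtain ⟨w, hw⟩ := card_eq_one.mp hv
  have hvw : G.Adj v w := (mem_neighborFinset G v w).mp (hw ▸ mem_singleton_self w)
  rw [internalNeighborFinset, hw, filter_singleton,
    if_pos (hG.two_le_degree_of_adj_of_degree_eq_one h3 hv hvw), card_singleton]

theorem sum_innerDoubledCycle_neighborFinset (v : V) :
    ∑ w ∈ G.neighborFinset v, G.innerDoubledCycle w =
      G.degree v + #(G.internalNeighborFinset v) := by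
  have hsplit : ∀ w, G.innerDoubledCycle w = 1 + if 2 ≤ G.degree w then 1 else 0 := by
    intro w
    unfold innerDoubledCycle
    split_ifs <;> rfl
  simp only [hsplit, sum_add_distrib, sum_const, sum_boole, card_neighborFinset_eq_degree,
    internalNeighborFinset, nsmul_one]

theorem adjMatrix_sub_diagonal_mulVec_apply {R : Type*} [CommRing R] [DecidableEq V]
    (d Z : V → R) (v : V) :
    ((G.adjMatrix R - diagonal d) *ᵥ Z) v = ∑ w ∈ G.neighborFinset v, Z w - d v * Z v := by
  rw [sub_mulVec, Pi.sub_apply, adjMatrix_mulVec_apply, mulVec_diagonal]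

theorem dotProduct_adjMatrix_sub_diagonal_mulVec_add {R : Type*} [CommRing R] [DecidableEq V]
    (d Z : V → R) :
    Z ⬝ᵥ ((G.adjMatrix R - diagonal d) *ᵥ Z) + ∑ v, Z v * (d v - 2) =
      ∑ v, Z v * (d v * (1 - Z v) + ∑ w ∈ G.neighborFinset v, Z w - 2) := by
  rw [dotProduct, ← sum_add_distrib]
  refine sum_congr rfl fun v _ => ?_
  rw [adjMatrix_sub_diagonal_mulVec_apply]
  ring

end SimpleGraph

open SimpleGraph

/-- for the intersection matrix `M` of a weighted finite tree and the
cycle `Z` (`Zᵥ = 2` at internal vertices, `1` at leaves), if every internal vertex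
`v ≠ v₀` satisfies `dᵥ = tᵥ + t'ᵥ - 2` and `ZᵀMZ + Σᵥ Zᵥ(dᵥ - 2) ≤ -2`, then
`d_{v₀} ≥ t_{v₀} + t'_{v₀} - 1`. -/
theorem stmt_11 {V : Type*} [Fintype V] [DecidableEq V]
    (G : SimpleGraph V) [DecidableRel G.Adj]
    (hG : G.IsTree) (h3 : 3 ≤ Fintype.card V)
    (d : V → ℤ)
    (M : Matrix V V ℤ)
    (hM : ∀ v w, M v w = if v = w then -d v else if G.Adj v w then 1 else 0)
    (Z : V → ℤ) (hZ : ∀ v, Z v = if 2 ≤ G.degree v then 2 else 1)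
    (v₀ : V) (hv₀ : 2 ≤ G.degree v₀)
    (hother : ∀ v, v ≠ v₀ → 2 ≤ G.degree v →
      d v = (G.degree v : ℤ) +
        (((G.neighborFinset v).filter fun w => 2 ≤ G.degree w).card : ℤ) - 2)
    (hrat : dotProduct Z (M.mulVec Z) + ∑ v, Z v * (d v - 2) ≤ -2) :
    (G.degree v₀ : ℤ) +
        (((G.neighborFinset v₀).filter fun w => 2 ≤ G.degree w).card : ℤ) - 1 ≤ d v₀ := by
  obtain rfl : Z = G.innerDoubledCycle := funext hZ
  obtain rfl : M = G.adjMatrix ℤ - diagonal d := by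
    ext v w
    by_cases h : v = w <;> simp [hM, h, diagonal]
  have hconn := hG.connected
  have hlocal : ∀ v ≠ v₀, G.innerDoubledCycle v * (d v * (1 - G.innerDoubledCycle v) +
      ∑ w ∈ G.neighborFinset v, G.innerDoubledCycle w - 2) = 0 := by
    intro v hv
    rw [sum_innerDoubledCycle_neighborFinset]
    by_cases hint : 2 ≤ G.degree v
    · simp only [innerDoubledCycle, if_pos hint, hother v hv hint, internalNeighborFinset]
      ring
    · have hleaf := hconn.degree_eq_one_of_not_two_le_degree (by omega) hint
      rw [hconn.card_internalNeighborFinset_eq_one h3 hleaf, hleaf]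
      simp only [innerDoubledCycle, if_neg hint]
      norm_num
  rw [dotProduct_adjMatrix_sub_diagonal_mulVec_add,
    sum_eq_single v₀ (fun v _ hv => hlocal v hv) (by simp),
    sum_innerDoubledCycle_neighborFinset] at hrat
  simp only [innerDoubledCycle, if_pos hv₀, internalNeighborFinset] at hrat
  linarith
end
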